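/- If A is a continuous inverse algebra, then the matrix algebra M_n(A) is a continuous inverse algebra for every n ∈ ℕ. -/

import Mathlib

/-- A continuous inverse algebra (CIA): a unital (locally convex) topological algebra
whose group of units is open and whose inversion is continuous at `1`. -/
def IsCIA (A : Type*) [Ring A] [TopologicalSpace A] : Prop :=
  IsOpen {a : A | IsUnit a} ∧ ContinuousAt (Ring.inverse : A → A) 1

/-!
Induct on `n`, splitting `Mₙ₊₁(A)` into blocks of sizes `n` and `1`. Near the identity the
top-left block `a` and its Schur complement `s = d - c a⁻¹ b` stay invertible, and the
factorisation `[a b; c d] = [1 0; c a⁻¹ 1] [a 0; 0 s] [1 a⁻¹ b; 0 1]` exhibits the inverse as an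
expression that is continuous in `a⁻¹` and `s⁻¹`; both are continuous at the identity since
`Mₙ(A)` and `A` are CIAs. Invertibility on a neighbourhood of `1` already makes the unit group
open, because left multiplication by a unit is a homeomorphism.
-/

open Matrix Filter Topology
open scoped Ring

theorem MulEquiv.map_ringInverse {M N : Type*} [MonoidWithZero M] [MonoidWithZero N]
    (e : M ≃* N) (x : M) : e x⁻¹ʳ = (e x)⁻¹ʳ := by
  by_cases hx : IsUnit x
  · obtain ⟨u, rfl⟩ := hx
    simpa using (Ring.inverse_unit (Units.map e.toMonoidHom u)).symm
  · rw [Ring.inverse_non_unit x hx, Ring.inverse_non_unit _ (mt (isUnit_map_iff e x).1 hx),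
      map_zero]

theorem isOpen_setOf_isUnit_of_mem_nhds_one {R : Type*} [Monoid R] [TopologicalSpace R]
    [ContinuousMul R] (h : {x : R | IsUnit x} ∈ 𝓝 1) : IsOpen {x : R | IsUnit x} := by
  refine isOpen_iff_mem_nhds.2 fun _ ⟨u, hu⟩ => ?_
  subst hu
  have hmul : Tendsto (fun y : R => ↑u⁻¹ * y) (𝓝 ↑u) (𝓝 1) := by
    simpa using (continuous_const_mul (↑u⁻¹ : R)).tendsto (u : R)
  filter_upwards [hmul h] with y hy
  simpa using u.isUnit.mul hy

theorem IsCIA.of_mulEquiv {R S : Type*} [Ring R] [Ring S] [TopologicalSpace R]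
    [TopologicalSpace S] (h : IsCIA R) (e : R ≃* S) (he : Continuous e)
    (he_symm : Continuous e.symm) : IsCIA S := by
  have hunits : {s : S | IsUnit s} = e.symm ⁻¹' {r : R | IsUnit r} := by
    ext s
    simp
  have hinv : (Ring.inverse : S → S) = e ∘ Ring.inverse ∘ e.symm := by
    funext s
    simp [e.map_ringInverse]
  refine ⟨hunits ▸ h.1.preimage he_symm, hinv ▸ ?_⟩
  exact he.continuousAt.comp (h.2.comp_of_eq he_symm.continuousAt (map_one e.symm))

theorem isCIA_of_subsingleton {R : Type*} [Ring R] [TopologicalSpace R] [Subsingleton R] :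
    IsCIA R :=
  ⟨by simp, by
    rw [show (Ring.inverse : R → R) = fun _ => 1 from Subsingleton.elim _ _]
    exact continuousAt_const⟩

theorem isCIA_of_eventually_inverse {R : Type*} [Ring R] [TopologicalSpace R] [ContinuousMul R]
    {g : R → R} (hg : ContinuousAt g 1) (h : ∀ᶠ x in 𝓝 1, IsUnit x ∧ x⁻¹ʳ = g x) : IsCIA R :=
  ⟨isOpen_setOf_isUnit_of_mem_nhds_one (h.mono fun _ hx => hx.1),
    hg.congr (h.mono fun _ hx => hx.2.symm)⟩

namespace IsCIA

variable {R X : Type*} [Ring R] [TopologicalSpace R] [TopologicalSpace X]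

theorem eventually_isUnit_comp (h : IsCIA R) {f : X → R} {x : X} (hf : ContinuousAt f x)
    (hx : f x = 1) : ∀ᶠ y in 𝓝 x, IsUnit (f y) :=
  hf.eventually (by rw [hx]; exact h.1.mem_nhds isUnit_one)

theorem continuousAt_inverse_comp (h : IsCIA R) {f : X → R} {x : X} (hf : ContinuousAt f x)
    (hx : f x = 1) : ContinuousAt (fun y => (f y)⁻¹ʳ) x :=
  h.2.comp_of_eq hf hx

end IsCIA

section BlockTopology

variable {X R l m n o : Type*} [TopologicalSpace X] [TopologicalSpace R]

@[fun_prop]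
theorem Continuous.matrix_toBlocks₁₁ {M : X → Matrix (n ⊕ o) (l ⊕ m) R} (hM : Continuous M) :
    Continuous fun x => (M x).toBlocks₁₁ :=
  continuous_matrix fun _ _ => hM.matrix_elem _ _

@[fun_prop]
theorem Continuous.matrix_toBlocks₁₂ {M : X → Matrix (n ⊕ o) (l ⊕ m) R} (hM : Continuous M) :
    Continuous fun x => (M x).toBlocks₁₂ :=
  continuous_matrix fun _ _ => hM.matrix_elem _ _

@[fun_prop]
theorem Continuous.matrix_toBlocks₂₁ {M : X → Matrix (n ⊕ o) (l ⊕ m) R} (hM : Continuous M) :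
    Continuous fun x => (M x).toBlocks₂₁ :=
  continuous_matrix fun _ _ => hM.matrix_elem _ _

@[fun_prop]
theorem Continuous.matrix_toBlocks₂₂ {M : X → Matrix (n ⊕ o) (l ⊕ m) R} (hM : Continuous M) :
    Continuous fun x => (M x).toBlocks₂₂ :=
  continuous_matrix fun _ _ => hM.matrix_elem _ _

end BlockTopology

namespace Matrix

variable {A m n : Type*} [Ring A] [Fintype m] [Fintype n] [DecidableEq m] [DecidableEq n]

theorem fromBlocks_eq_of_isUnit₁₁ (a : Matrix m m A) (b : Matrix m n A) (c : Matrix n m A)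
    (d : Matrix n n A) (ha : IsUnit a) :
    fromBlocks a b c d =
      fromBlocks 1 0 (c * a⁻¹ʳ) 1 * fromBlocks a 0 0 (d - c * a⁻¹ʳ * b) *
        fromBlocks 1 (a⁻¹ʳ * b) 0 1 := by
  have hb : a * (a⁻¹ʳ * b) = b := by
    rw [← Matrix.mul_assoc, Ring.mul_inverse_cancel _ ha, Matrix.one_mul]
  simp [fromBlocks_multiply, Matrix.mul_assoc, Ring.inverse_mul_cancel _ ha, hb]

noncomputable def blockInverse₁₁ (a : Matrix m m A) (b : Matrix m n A) (c : Matrix n m A)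
    (d : Matrix n n A) : Matrix (m ⊕ n) (m ⊕ n) A :=
  fromBlocks 1 (-(a⁻¹ʳ * b)) 0 1 * fromBlocks a⁻¹ʳ 0 0 (d - c * a⁻¹ʳ * b)⁻¹ʳ *
    fromBlocks 1 0 (-(c * a⁻¹ʳ)) 1

theorem isUnit_fromBlocks_and_inverse_eq_of_isUnit₁₁ (a : Matrix m m A) (b : Matrix m n A)
    (c : Matrix n m A) (d : Matrix n n A) (ha : IsUnit a) (hs : IsUnit (d - c * a⁻¹ʳ * b)) :
    IsUnit (fromBlocks a b c d) ∧ (fromBlocks a b c d)⁻¹ʳ = blockInverse₁₁ a b c d := by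
  let lower : (Matrix (m ⊕ n) (m ⊕ n) A)ˣ :=
    ⟨fromBlocks 1 0 (c * a⁻¹ʳ) 1, fromBlocks 1 0 (-(c * a⁻¹ʳ)) 1,
      by simp [fromBlocks_multiply], by simp [fromBlocks_multiply]⟩
  let upper : (Matrix (m ⊕ n) (m ⊕ n) A)ˣ :=
    ⟨fromBlocks 1 (a⁻¹ʳ * b) 0 1, fromBlocks 1 (-(a⁻¹ʳ * b)) 0 1,
      by simp [fromBlocks_multiply], by simp [fromBlocks_multiply]⟩
  let diag : (Matrix (m ⊕ n) (m ⊕ n) A)ˣ :=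
    ⟨fromBlocks a 0 0 (d - c * a⁻¹ʳ * b), fromBlocks a⁻¹ʳ 0 0 (d - c * a⁻¹ʳ * b)⁻¹ʳ,
      by simp [fromBlocks_multiply, Ring.mul_inverse_cancel _ ha, Ring.mul_inverse_cancel _ hs],
      by simp [fromBlocks_multiply, Ring.inverse_mul_cancel _ ha, Ring.inverse_mul_cancel _ hs]⟩
  have hM : fromBlocks a b c d = ↑(lower * diag * upper) := fromBlocks_eq_of_isUnit₁₁ a b c d ha
  rw [hM, Ring.inverse_unit]
  exact ⟨Units.isUnit _, by rw [blockInverse₁₁, Matrix.mul_assoc]; rfl⟩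

end Matrix

namespace IsCIA

variable {A m n : Type*} [Ring A] [TopologicalSpace A]
  [Fintype m] [Fintype n] [DecidableEq m] [DecidableEq n]

theorem matrix_sum [IsTopologicalRing A] (hm : IsCIA (Matrix m m A))
    (hn : IsCIA (Matrix n n A)) : IsCIA (Matrix (m ⊕ n) (m ⊕ n) A) := by
  let schur (M : Matrix (m ⊕ n) (m ⊕ n) A) : Matrix n n A :=
    M.toBlocks₂₂ - M.toBlocks₂₁ * M.toBlocks₁₁⁻¹ʳ * M.toBlocks₁₂
  have hone : (1 : Matrix (m ⊕ n) (m ⊕ n) A).toBlocks₁₁ = 1 ∧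
      (1 : Matrix (m ⊕ n) (m ⊕ n) A).toBlocks₁₂ = 0 ∧
      (1 : Matrix (m ⊕ n) (m ⊕ n) A).toBlocks₂₁ = 0 ∧
      (1 : Matrix (m ⊕ n) (m ⊕ n) A).toBlocks₂₂ = 1 := by
    simp [← fromBlocks_one]
  have hblock₁₁ : ContinuousAt (fun M : Matrix (m ⊕ n) (m ⊕ n) A => M.toBlocks₁₁) 1 := by
    fun_prop
  have hinv₁₁ := hm.continuousAt_inverse_comp hblock₁₁ hone.1
  have hschur : ContinuousAt schur 1 := by
    have : Continuous fun p : Matrix (m ⊕ n) (m ⊕ n) A × Matrix m m A =>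
        p.1.toBlocks₂₂ - p.1.toBlocks₂₁ * p.2 * p.1.toBlocks₁₂ := by fun_prop
    exact this.continuousAt.comp (continuousAt_id.prodMk hinv₁₁)
  have hschur_one : schur 1 = 1 := by simp [schur, hone]
  refine isCIA_of_eventually_inverse
    (g := fun M => blockInverse₁₁ M.toBlocks₁₁ M.toBlocks₁₂ M.toBlocks₂₁ M.toBlocks₂₂) ?_ ?_
  · have : Continuous fun p : Matrix (m ⊕ n) (m ⊕ n) A × Matrix m m A × Matrix n n A =>
        fromBlocks 1 (-(p.2.1 * p.1.toBlocks₁₂)) 0 1 * fromBlocks p.2.1 0 0 p.2.2 *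
          fromBlocks 1 0 (-(p.1.toBlocks₂₁ * p.2.1)) 1 := by fun_prop
    have hcomp := this.continuousAt.comp
      (continuousAt_id.prodMk (hinv₁₁.prodMk (hn.continuousAt_inverse_comp hschur hschur_one)))
    exact hcomp
  · filter_upwards [hm.eventually_isUnit_comp hblock₁₁ hone.1,
      hn.eventually_isUnit_comp hschur hschur_one] with M ha hs
    have h := isUnit_fromBlocks_and_inverse_eq_of_isUnit₁₁ _ _ _ _ ha hs
    rwa [fromBlocks_toBlocks] at h

theorem matrix_unique [Unique m] (h : IsCIA A) : IsCIA (Matrix m m A) := by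
  -- `uniqueRingEquiv` multiplies matrices using the `Fintype` instance derived from `Unique`.
  obtain rfl : ‹Fintype m› = Unique.fintype := Subsingleton.elim _ _
  have hentry : Continuous fun M : Matrix m m A => M default default :=
    continuous_id.matrix_elem default default
  exact h.of_mulEquiv (uniqueRingEquiv (m := m) (A := A)).symm.toMulEquiv
    (continuous_matrix fun _ _ => continuous_id) hentry

theorem matrix_reindex (h : IsCIA (Matrix m m A)) (e : m ≃ n) : IsCIA (Matrix n n A) :=
  h.of_mulEquiv (reindexRingEquiv A e).toMulEquiv (continuous_id.matrix_reindex e e)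
    (continuous_id.matrix_reindex e.symm e.symm)

end IsCIA

theorem isCIA_matrix_general
    {A : Type*} [Ring A] [TopologicalSpace A] [IsTopologicalRing A]
    (hA : IsCIA A) :
    ∀ n : ℕ, IsCIA (Matrix (Fin n) (Fin n) A) := by
  intro n
  induction n with
  | zero => exact isCIA_of_subsingleton
  | succ n ih => exact (ih.matrix_sum hA.matrix_unique).matrix_reindex finSumFinEquiv

/-- If `A` is a continuous inverse algebra, then the matrix algebra `Mₙ(A)` is a
continuous inverse algebra for every `n ∈ ℕ`. -/
theorem isCIA_matrix
    {A : Type*} [Ring A] [Algebra ℂ A] [TopologicalSpace A] [IsTopologicalRing A]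
    [ContinuousSMul ℂ A] [LocallyConvexSpace ℝ A]
    (hA : IsCIA A) :
    ∀ n : ℕ, IsCIA (Matrix (Fin n) (Fin n) A) :=
  isCIA_matrix_general hA
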